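/- arXiv:1010.4369 — 3 statements merged into one kernel-verified Lean document; each statement's English description precedes it below -/
import Mathlib

section
/- The system matrix of a linear quantum system satisfies A + A^♭ + C_f^♭ C_f = 0, where A = -Δ(iΩ_-, iΩ_+) - Δ(Γ_-, Γ_+), C_f = Δ(C_-, C_+), Γ_∓ = (1/2)(C_-† C_∓ - C_+^T C_±^#), for any Ω_- Hermitian, Ω_+ symmetric, and C_-, C_+ ∈ ℂ^{m×n}. -/
/-! `flat` is a conjugate-linear, anti-multiplicative involution with
`flat (dup U V) = dup Uᴴ (-Vᵀ)`. So the Hamiltonian part `dup (I • Ωm) (I • Ωp)` is `flat`-skew,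
while the damping part `dup Γm Γp = (1/2) • flat Cf * Cf` is `flat`-self-adjoint; adding `A` and
`flat A` leaves exactly `-flat Cf * Cf`. -/

open Matrix Complex

noncomputable def Jmat (n : ℕ) : Matrix (Fin n ⊕ Fin n) (Fin n ⊕ Fin n) ℂ :=
  Matrix.fromBlocks 1 0 0 (-1)

noncomputable def flat {n m : ℕ}
    (X : Matrix (Fin n ⊕ Fin n) (Fin m ⊕ Fin m) ℂ) :
    Matrix (Fin m ⊕ Fin m) (Fin n ⊕ Fin n) ℂ :=
  Jmat m * Xᴴ * Jmat n

noncomputable def dup {r k : ℕ} (U V : Matrix (Fin r) (Fin k) ℂ) :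
    Matrix (Fin r ⊕ Fin r) (Fin k ⊕ Fin k) ℂ :=
  Matrix.fromBlocks U V (V.map (starRingEnd ℂ)) (U.map (starRingEnd ℂ))

section Flat

variable {n m k : ℕ}

theorem Jmat_conjTranspose : (Jmat n)ᴴ = Jmat n := by
  simp [Jmat, fromBlocks_conjTranspose]

theorem Jmat_mul_self : Jmat n * Jmat n = 1 := by
  simp [Jmat, fromBlocks_multiply, ← fromBlocks_one]

theorem flat_flat (X : Matrix (Fin n ⊕ Fin n) (Fin m ⊕ Fin m) ℂ) : flat (flat X) = X := by
  simp only [flat, conjTranspose_mul, Jmat_conjTranspose, conjTranspose_conjTranspose,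
    ← Matrix.mul_assoc, Jmat_mul_self, Matrix.one_mul]
  rw [Matrix.mul_assoc, Jmat_mul_self, Matrix.mul_one]

theorem flat_mul (X : Matrix (Fin n ⊕ Fin n) (Fin k ⊕ Fin k) ℂ)
    (Y : Matrix (Fin k ⊕ Fin k) (Fin m ⊕ Fin m) ℂ) : flat (X * Y) = flat Y * flat X := by
  simp only [flat, conjTranspose_mul, Matrix.mul_assoc]
  rw [← Matrix.mul_assoc (Jmat k) (Jmat k), Jmat_mul_self, Matrix.one_mul]

theorem flat_sub (X Y : Matrix (Fin n ⊕ Fin n) (Fin m ⊕ Fin m) ℂ) :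
    flat (X - Y) = flat X - flat Y := by
  simp only [flat, conjTranspose_sub, Matrix.mul_sub, Matrix.sub_mul]

theorem flat_neg (X : Matrix (Fin n ⊕ Fin n) (Fin m ⊕ Fin m) ℂ) : flat (-X) = -flat X := by
  simp only [flat, conjTranspose_neg, Matrix.mul_neg, Matrix.neg_mul]

theorem flat_smul (c : ℂ) (X : Matrix (Fin n ⊕ Fin n) (Fin m ⊕ Fin m) ℂ) :
    flat (c • X) = star c • flat X := by
  simp only [flat, conjTranspose_smul, Matrix.mul_smul, Matrix.smul_mul]

end Flat

section Dup

variable {r k l : ℕ}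

theorem dup_neg (U V : Matrix (Fin r) (Fin k) ℂ) : dup (-U) (-V) = -dup U V := by
  ext (i | i) (j | j) <;> simp [dup]

theorem dup_smul_of_conj_eq {c : ℂ} (hc : starRingEnd ℂ c = c) (U V : Matrix (Fin r) (Fin k) ℂ) :
    dup (c • U) (c • V) = c • dup U V := by
  ext (i | i) (j | j) <;> simp [dup, hc]

theorem dup_mul (U V : Matrix (Fin r) (Fin k) ℂ) (X Y : Matrix (Fin k) (Fin l) ℂ) :
    dup U V * dup X Y =
      dup (U * X + V * Y.map (starRingEnd ℂ)) (U * Y + V * X.map (starRingEnd ℂ)) := by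
  rw [dup, dup, fromBlocks_multiply, dup]
  congr 1 <;> ext i j <;> simp [Matrix.mul_apply, add_comm]

theorem flat_dup (U V : Matrix (Fin r) (Fin k) ℂ) : flat (dup U V) = dup Uᴴ (-Vᵀ) := by
  simp only [flat, dup, Jmat, fromBlocks_conjTranspose, fromBlocks_multiply]
  ext (i | i) (j | j) <;> simp

theorem flat_dup_mul_dup (U V : Matrix (Fin r) (Fin k) ℂ) :
    flat (dup U V) * dup U V =
      dup (Uᴴ * U - Vᵀ * V.map (starRingEnd ℂ)) (Uᴴ * V - Vᵀ * U.map (starRingEnd ℂ)) := by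
  rw [flat_dup, dup_mul, Matrix.neg_mul, Matrix.neg_mul, ← sub_eq_add_neg, ← sub_eq_add_neg]

theorem flat_dup_I_smul_eq_neg {U V : Matrix (Fin r) (Fin r) ℂ} (hU : Uᴴ = U) (hV : Vᵀ = V) :
    flat (dup (I • U) (I • V)) = -dup (I • U) (I • V) := by
  rw [flat_dup, conjTranspose_smul, transpose_smul, hU, hV, ← dup_neg, star_def, conj_I, neg_smul]

end Dup

theorem realizability_identity {n m : ℕ}
    (Ωm Ωp : Matrix (Fin n) (Fin n) ℂ)
    (hΩm : Ωm = Ωmᴴ) (hΩp : Ωp = Ωpᵀ)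
    (Cm Cp : Matrix (Fin m) (Fin n) ℂ)
    (Γm Γp : Matrix (Fin n) (Fin n) ℂ)
    (hΓm : Γm = (1/2 : ℂ) • (Cmᴴ * Cm - Cpᵀ * Cp.map (starRingEnd ℂ)))
    (hΓp : Γp = (1/2 : ℂ) • (Cmᴴ * Cp - Cpᵀ * Cm.map (starRingEnd ℂ)))
    (A : Matrix (Fin n ⊕ Fin n) (Fin n ⊕ Fin n) ℂ)
    (hA : A = -dup (Complex.I • Ωm) (Complex.I • Ωp) - dup Γm Γp)
    (Cf : Matrix (Fin m ⊕ Fin m) (Fin n ⊕ Fin n) ℂ)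
    (hCf : Cf = dup Cm Cp) :
    A + flat A + flat Cf * Cf = 0 := by
  have hhalf : starRingEnd ℂ (1 / 2) = 1 / 2 := by simp [map_ofNat]
  have hΓ : dup Γm Γp = (1 / 2 : ℂ) • (flat Cf * Cf) := by
    rw [hΓm, hΓp, dup_smul_of_conj_eq hhalf, hCf, flat_dup_mul_dup]
  have hΓ_flat : flat (dup Γm Γp) = dup Γm Γp := by
    rw [hΓ, flat_smul, flat_mul, flat_flat, star_def, hhalf]
  have hΩ_flat := flat_dup_I_smul_eq_neg hΩm.symm hΩp.symm
  rw [hA, flat_sub, flat_neg, hΩ_flat, hΓ_flat, hΓ]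
  module
end

section
/- For the degenerate parametric amplifier with 0 ≤ ε < κ, the L² gain from input to output equals (κ+ε)/(κ-ε): the transfer function H(iω) = C(iωI−A)^{-1}B + I with A = -(1/2)[[κ,-ε],[-ε,κ]], B = -√κ I, C = √κ I, D = I, has supremum of its operator norm over ω ∈ ℝ equal to (κ+ε)/(κ-ε), attained at ω = 0. -/
open Matrix Complex

noncomputable def dpaH (κ ε : ℝ) (ω : ℝ) : Matrix (Fin 2) (Fin 2) ℂ :=
  let A : Matrix (Fin 2) (Fin 2) ℂ :=
    (-(1/2) : ℂ) • Matrix.of ![![(κ : ℂ), (-ε : ℂ)], ![(-ε : ℂ), (κ : ℂ)]]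
  let B : Matrix (Fin 2) (Fin 2) ℂ := (-(Real.sqrt κ) : ℂ) • 1
  let C : Matrix (Fin 2) (Fin 2) ℂ := ((Real.sqrt κ : ℝ) : ℂ) • 1
  C * ((Complex.I * ω) • (1 : Matrix (Fin 2) (Fin 2) ℂ) - A)⁻¹ * B + 1

private lemma normSq_key (p q a b : ℂ) :
    2 * (normSq (p*a+q*b) + normSq (q*a+p*b)) =
      normSq (p+q) * normSq (a+b) + normSq (p-q) * normSq (a-b) := by
  simp only [Complex.normSq_apply, Complex.add_re, Complex.add_im, Complex.mul_re,
    Complex.mul_im, Complex.sub_re, Complex.sub_im]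
  ring

private lemma apply_coord (M : Matrix (Fin 2) (Fin 2) ℂ) (x : EuclideanSpace ℂ (Fin 2))
    (i : Fin 2) : (Matrix.toEuclideanCLM (𝕜 := ℂ) M x) i = M.mulVec x i :=
  congrFun (Matrix.ofLp_toEuclideanCLM (𝕜 := ℂ) M x) i

private lemma opNorm_symm_le (p q : ℂ) (r : ℝ) (hr : 0 ≤ r)
    (h1 : normSq (p+q) ≤ r^2) (h2 : normSq (p-q) ≤ r^2) :
    ‖Matrix.toEuclideanCLM (𝕜 := ℂ) (!![p,q;q,p])‖ ≤ r := by
  apply ContinuousLinearMap.opNorm_le_bound _ hr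
  intro x
  have hxn : ‖x‖ = Real.sqrt (normSq (x 0) + normSq (x 1)) := by
    rw [EuclideanSpace.norm_eq]
    simp [Fin.sum_univ_two, Complex.sq_norm]
  have hMx : ‖Matrix.toEuclideanCLM (𝕜 := ℂ) (!![p,q;q,p]) x‖ =
      Real.sqrt (normSq (p * x 0 + q * x 1) + normSq (q * x 0 + p * x 1)) := by
    rw [EuclideanSpace.norm_eq]
    congr 1
    rw [Fin.sum_univ_two, apply_coord, apply_coord]
    simp [Matrix.mulVec, dotProduct, Fin.sum_univ_two, Complex.sq_norm]
  rw [hMx, hxn, ← Real.sqrt_sq hr, ← Real.sqrt_mul (sq_nonneg r)]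
  apply Real.sqrt_le_sqrt
  have key := normSq_key p q (x 0) (x 1)
  have par : normSq (x 0 + x 1) + normSq (x 0 - x 1) = 2 * (normSq (x 0) + normSq (x 1)) := by
    simp only [Complex.normSq_apply, Complex.add_re, Complex.add_im, Complex.sub_re,
      Complex.sub_im]
    ring
  nlinarith [Complex.normSq_nonneg (x 0 + x 1), Complex.normSq_nonneg (x 0 - x 1),
    Complex.normSq_nonneg (x 0), Complex.normSq_nonneg (x 1)]

private lemma opNorm_symm_ge (p q : ℂ) :
    ‖p+q‖ ≤ ‖Matrix.toEuclideanCLM (𝕜 := ℂ) (!![p,q;q,p])‖ := by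
  set T := Matrix.toEuclideanCLM (𝕜 := ℂ) (!![p,q;q,p])
  set x : EuclideanSpace ℂ (Fin 2) := (WithLp.equiv 2 (Fin 2 → ℂ)).symm ![1,1] with hxdef
  have hx0 : x 0 = 1 := rfl
  have hx1 : x 1 = 1 := rfl
  have hxn : ‖x‖ = Real.sqrt 2 := by
    rw [EuclideanSpace.norm_eq]
    norm_num [Fin.sum_univ_two, hx0, hx1]
  have hTx : ‖T x‖ = ‖p+q‖ * Real.sqrt 2 := by
    rw [EuclideanSpace.norm_eq, Fin.sum_univ_two, apply_coord, apply_coord]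
    simp [Matrix.mulVec, dotProduct, Fin.sum_univ_two, hx0, hx1]
    rw [show q + p = p + q from add_comm q p]
    rw [show ‖p+q‖ ^ 2 + ‖p+q‖ ^ 2 = ‖p+q‖ ^ 2 * 2 by ring,
      Real.sqrt_mul (by positivity), Real.sqrt_sq (norm_nonneg _)]
  have h := T.le_opNorm x
  rw [hTx, hxn] at h
  have h2 : (0:ℝ) < Real.sqrt 2 := by positivity
  exact le_of_mul_le_mul_right h h2

private lemma dpaH_eq (κ ε : ℝ) (hκ : 0 < κ) (hε : 0 ≤ ε) (hεκ : ε < κ) (ω : ℝ) :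
    dpaH κ ε ω =
      !![1 - (κ:ℂ) * (Complex.I*ω + κ/2) / ((Complex.I*ω + κ/2)^2 - (ε/2)^2),
         -((κ:ℂ)*ε/2) / ((Complex.I*ω + κ/2)^2 - (ε/2)^2);
         -((κ:ℂ)*ε/2) / ((Complex.I*ω + κ/2)^2 - (ε/2)^2),
         1 - (κ:ℂ) * (Complex.I*ω + κ/2) / ((Complex.I*ω + κ/2)^2 - (ε/2)^2)] := by
  set a : ℂ := Complex.I*ω + κ/2 with ha
  set Δ : ℂ := a^2 - (ε/2:ℂ)^2 with hΔdef
  have h1 : (Complex.I*(ω:ℂ) + ((κ:ℂ)+ε)/2) ≠ 0 := by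
    intro h
    have := congrArg Complex.re h
    simp [Complex.add_re, Complex.mul_re] at this
    linarith
  have h2 : (Complex.I*(ω:ℂ) + ((κ:ℂ)-ε)/2) ≠ 0 := by
    intro h
    have := congrArg Complex.re h
    simp [Complex.add_re, Complex.mul_re] at this
    linarith
  have hΔ : Δ ≠ 0 := by
    have : Δ = (Complex.I*(ω:ℂ) + ((κ:ℂ)+ε)/2) * (Complex.I*(ω:ℂ) + ((κ:ℂ)-ε)/2) := by
      rw [hΔdef, ha]; ring
    rw [this]
    exact mul_ne_zero h1 h2
  have hM : (Complex.I * (ω:ℂ)) • (1 : Matrix (Fin 2) (Fin 2) ℂ) -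
      ((-(1/2) : ℂ) • Matrix.of ![![(κ : ℂ), (-ε : ℂ)], ![(-ε : ℂ), (κ : ℂ)]]) =
      !![a, -(ε/2:ℂ); -(ε/2:ℂ), a] := by
    ext i j
    fin_cases i <;> fin_cases j <;>
      simp [Matrix.one_apply, ha] <;> ring
  have hinv : (!![a, -(ε/2:ℂ); -(ε/2:ℂ), a])⁻¹ = !![a/Δ, (ε/2:ℂ)/Δ; (ε/2:ℂ)/Δ, a/Δ] := by
    apply Matrix.inv_eq_right_inv
    ext i j
    fin_cases i <;> fin_cases j <;>
      simp [Matrix.mul_apply, Fin.sum_univ_two, Matrix.one_apply] <;>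
      field_simp <;> ring
  have hCNB : ∀ N : Matrix (Fin 2) (Fin 2) ℂ,
      (((Real.sqrt κ : ℝ) : ℂ) • (1 : Matrix (Fin 2) (Fin 2) ℂ)) * N *
        ((-(Real.sqrt κ) : ℂ) • 1) = (-(κ:ℂ)) • N := by
    intro N
    rw [Matrix.smul_mul, Matrix.one_mul, Matrix.mul_smul, Matrix.mul_one, smul_smul]
    congr 1
    rw [neg_mul, ← Complex.ofReal_mul, Real.mul_self_sqrt hκ.le]
  unfold dpaH
  dsimp only
  rw [hM, hinv, hCNB]
  ext i j
  fin_cases i <;> fin_cases j <;>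
    simp [Matrix.one_apply, Matrix.smul_apply] <;>
    field_simp <;> ring

private lemma denom_ne (c : ℝ) (hc : c ≠ 0) (ω : ℝ) : (Complex.I*(ω:ℂ) + (c:ℂ)) ≠ 0 := by
  intro h
  have := congrArg Complex.re h
  simp [Complex.add_re, Complex.mul_re] at this
  exact hc this

private lemma Delta_ne (κ ε : ℝ) (hκ : 0 < κ) (hε : 0 ≤ ε) (hεκ : ε < κ) (ω : ℝ) :
    ((Complex.I*(ω:ℂ) + (κ:ℂ)/2)^2 - ((ε:ℂ)/2)^2) ≠ 0 := by
  have heq : ((Complex.I*(ω:ℂ) + (κ:ℂ)/2)^2 - ((ε:ℂ)/2)^2) =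
      (Complex.I*(ω:ℂ) + ((((κ+ε)/2 : ℝ)):ℂ)) * (Complex.I*(ω:ℂ) + ((((κ-ε)/2 : ℝ)):ℂ)) := by
    push_cast; ring
  rw [heq]
  exact mul_ne_zero (denom_ne _ (by positivity) ω) (denom_ne _ (ne_of_gt (by linarith)) ω)

private lemma frac_aux (u v n Δ d : ℂ) (hΔ : Δ ≠ 0) (hd : d ≠ 0)
    (h : (Δ - u + v) * d = n * Δ) : 1 - u/Δ + v/Δ = n/d := by
  field_simp
  linear_combination h

private lemma frac_aux' (u v n Δ d : ℂ) (hΔ : Δ ≠ 0) (hd : d ≠ 0)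
    (h : (Δ - u - v) * d = n * Δ) : 1 - u/Δ - v/Δ = n/d := by
  field_simp
  linear_combination h

private lemma PQ_add (κ ε : ℝ) (hκ : 0 < κ) (hε : 0 ≤ ε) (hεκ : ε < κ) (ω : ℝ) :
    (1 - (κ:ℂ) * (Complex.I*ω + κ/2) / ((Complex.I*ω + κ/2)^2 - (ε/2)^2)) +
      (-((κ:ℂ)*ε/2) / ((Complex.I*ω + κ/2)^2 - (ε/2)^2)) =
    (Complex.I*(ω:ℂ) - (((κ+ε)/2 : ℝ):ℂ)) / (Complex.I*(ω:ℂ) + (((κ-ε)/2 : ℝ):ℂ)) := by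
  have hΔ := Delta_ne κ ε hκ hε hεκ ω
  have h2 := denom_ne ((κ-ε)/2) (ne_of_gt (by linarith)) ω
  exact frac_aux _ _ _ _ _ hΔ h2 (by push_cast; ring)

private lemma PQ_sub (κ ε : ℝ) (hκ : 0 < κ) (hε : 0 ≤ ε) (hεκ : ε < κ) (ω : ℝ) :
    (1 - (κ:ℂ) * (Complex.I*ω + κ/2) / ((Complex.I*ω + κ/2)^2 - (ε/2)^2)) -
      (-((κ:ℂ)*ε/2) / ((Complex.I*ω + κ/2)^2 - (ε/2)^2)) =
    (Complex.I*(ω:ℂ) - (((κ-ε)/2 : ℝ):ℂ)) / (Complex.I*(ω:ℂ) + (((κ+ε)/2 : ℝ):ℂ)) := by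
  have hΔ := Delta_ne κ ε hκ hε hεκ ω
  have h1 := denom_ne ((κ+ε)/2) (ne_of_gt (by positivity)) ω
  exact frac_aux' _ _ _ _ _ hΔ h1 (by push_cast; ring)

private lemma normSq_lin (ω c : ℝ) : normSq (Complex.I*(ω:ℂ) + (c:ℂ)) = ω^2 + c^2 := by
  simp [Complex.normSq_apply, Complex.add_re, Complex.add_im, Complex.mul_re, Complex.mul_im]
  ring

private lemma normSq_lin' (ω c : ℝ) : normSq (Complex.I*(ω:ℂ) - (c:ℂ)) = ω^2 + c^2 := by
  rw [show Complex.I*(ω:ℂ) - (c:ℂ) = Complex.I*(ω:ℂ) + (((-c : ℝ)):ℂ) by push_cast; ring,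
    normSq_lin]
  ring

private lemma main_bound (κ ε : ℝ) (hκ : 0 < κ) (hε : 0 ≤ ε) (hεκ : ε < κ) (ω : ℝ) :
    ‖Matrix.toEuclideanCLM (𝕜 := ℂ) (dpaH κ ε ω)‖ ≤ (κ + ε) / (κ - ε) := by
  have ht : (0:ℝ) < (κ - ε)/2 := by linarith
  have hs : (0:ℝ) < (κ + ε)/2 := by linarith
  have hkε : (0:ℝ) < κ - ε := by linarith
  have hr : (0:ℝ) ≤ (κ + ε) / (κ - ε) := div_nonneg (by linarith) (by linarith)
  rw [dpaH_eq κ ε hκ hε hεκ ω]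
  apply opNorm_symm_le _ _ _ hr
  · rw [PQ_add κ ε hκ hε hεκ ω, map_div₀, normSq_lin, normSq_lin',
      show ((κ+ε)/(κ-ε))^2 = (κ+ε)^2/(κ-ε)^2 from div_pow _ _ 2,
      div_le_div_iff₀ (by positivity) (by positivity)]
    nlinarith [sq_nonneg ω, mul_pos ht hs,
      mul_le_mul_of_nonneg_left (show (κ-ε)^2 ≤ (κ+ε)^2 by nlinarith) (sq_nonneg ω)]
  · rw [PQ_sub κ ε hκ hε hεκ ω, map_div₀, normSq_lin, normSq_lin',
      show ((κ+ε)/(κ-ε))^2 = (κ+ε)^2/(κ-ε)^2 from div_pow _ _ 2,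
      div_le_div_iff₀ (by positivity) (by positivity)]
    nlinarith [sq_nonneg ω, mul_pos ht hs,
      mul_le_mul_of_nonneg_left (show (κ-ε)^2 ≤ (κ+ε)^2 by nlinarith) (sq_nonneg ω),
      mul_le_mul (show ((κ-ε)/2)^2 ≤ ((κ+ε)/2)^2 by nlinarith)
        (show (κ-ε)^2 ≤ (κ+ε)^2 by nlinarith) (sq_nonneg _) (sq_nonneg _)]

private lemma zero_val (κ ε : ℝ) (hκ : 0 < κ) (hε : 0 ≤ ε) (hεκ : ε < κ) :
    ‖Matrix.toEuclideanCLM (𝕜 := ℂ) (dpaH κ ε 0)‖ = (κ + ε) / (κ - ε) := by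
  refine le_antisymm (main_bound κ ε hκ hε hεκ 0) ?_
  rw [dpaH_eq κ ε hκ hε hεκ 0]
  have hkε : (0:ℝ) < κ - ε := by linarith
  have habs : ‖
      ((1 - (κ:ℂ) * (Complex.I*(0:ℝ) + κ/2) / ((Complex.I*(0:ℝ) + κ/2)^2 - (ε/2)^2)) +
        (-((κ:ℂ)*ε/2) / ((Complex.I*(0:ℝ) + κ/2)^2 - (ε/2)^2)))‖ = (κ + ε) / (κ - ε) := by
    rw [PQ_add κ ε hκ hε hεκ 0]
    rw [show (Complex.I*((0:ℝ):ℂ) - (((κ+ε)/2 : ℝ):ℂ)) / (Complex.I*((0:ℝ):ℂ) + (((κ-ε)/2 : ℝ):ℂ))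
        = (((-((κ+ε)/2) / ((κ-ε)/2) : ℝ)):ℂ) by push_cast; ring_nf]
    rw [Complex.norm_real, Real.norm_eq_abs, abs_div, abs_neg, abs_of_pos (by linarith : (0:ℝ) < (κ+ε)/2),
      abs_of_pos (by linarith : (0:ℝ) < (κ-ε)/2)]
    rw [div_eq_div_iff (by linarith) (by linarith)]
    ring
  calc (κ + ε) / (κ - ε) = _ := habs.symm
    _ ≤ _ := opNorm_symm_ge _ _

theorem dpa_gain (κ ε : ℝ) (hκ : 0 < κ) (hε : 0 ≤ ε) (hεκ : ε < κ) :
    (⨆ ω : ℝ, ‖Matrix.toEuclideanCLM (𝕜 := ℂ) (dpaH κ ε ω)‖) = (κ + ε) / (κ - ε) ∧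
      ‖Matrix.toEuclideanCLM (𝕜 := ℂ) (dpaH κ ε 0)‖ = (κ + ε) / (κ - ε) := by
  have h0 := zero_val κ ε hκ hε hεκ
  have hub := main_bound κ ε hκ hε hεκ
  have hbdd : BddAbove (Set.range fun ω : ℝ =>
      ‖Matrix.toEuclideanCLM (𝕜 := ℂ) (dpaH κ ε ω)‖) := by
    refine ⟨(κ + ε) / (κ - ε), ?_⟩
    rintro _ ⟨ω, rfl⟩
    exact hub ω
  refine ⟨le_antisymm (ciSup_le hub) ?_, h0⟩
  calc (κ + ε) / (κ - ε) = ‖Matrix.toEuclideanCLM (𝕜 := ℂ) (dpaH κ ε 0)‖ := h0.symm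
    _ ≤ _ := le_ciSup hbdd 0
end

section
/- In the passivity analysis with P = I, C_p = B†, and Q = -(A + A†) where A = -Δ(iΩ_-, iΩ_+) - Δ(Γ_-, Γ_+), the matrix Q equals Δ(C_-†C_- - C_+^T C_+^#, 2iΩ_+); in particular the LMI [[PA + A†P + Q, PB - C_p†],[B†P - C_p, 0]] = 0 is satisfied with equality. -/
/-! `Δ` is additive and `Δ(U, V)† = Δ(U†, Vᵀ)`, so with `A = -Δ(W, Z)`, `W = iΩ₋ + Γ₋`,
`Z = iΩ₊ + Γ₊`, we get `-(A + A†) = Δ(W + W†, Z + Zᵀ)`. Since `Ω₋` is Hermitian and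
`Γ₋ = X/2` with `X = C₋†C₋ - (C₊^#)†C₊^#` Hermitian, `W + W† = X`; since `Ω₊` is symmetric
and `Γ₊` antisymmetric, `Z + Zᵀ = 2iΩ₊`. -/

open Matrix

section ConjugateMatrix

variable {ι κ R : Type*} [CommRing R] [StarRing R]

theorem conjTranspose_map_starRingEnd (M : Matrix ι κ R) :
    (M.map (starRingEnd R))ᴴ = Mᵀ := by
  ext i j
  simp [starRingEnd_apply]

theorem transpose_map_starRingEnd (M : Matrix ι κ R) :
    (M.map (starRingEnd R))ᵀ = Mᴴ := rfl

variable [Fintype ι]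

theorem isHermitian_conjTranspose_mul_self_sub_transpose_mul_map (M N : Matrix ι κ R) :
    (Mᴴ * M - Nᵀ * N.map (starRingEnd R)).IsHermitian := by
  rw [← conjTranspose_map_starRingEnd N]
  exact (isHermitian_conjTranspose_mul_self M).sub (isHermitian_conjTranspose_mul_self _)

theorem transpose_conjTranspose_mul_sub_transpose_mul_map (M N : Matrix ι κ R) :
    (Mᴴ * N - Nᵀ * M.map (starRingEnd R))ᵀ = -(Mᴴ * N - Nᵀ * M.map (starRingEnd R)) := by
  rw [transpose_sub, transpose_mul, transpose_mul, transpose_transpose,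
    transpose_map_starRingEnd, neg_sub]
  rfl

end ConjugateMatrix

section dup

variable {r k : ℕ}

theorem dup_add (U V U' V' : Matrix (Fin r) (Fin k) ℂ) :
    dup (U + U') (V + V') = dup U V + dup U' V' := by
  ext (i | i) (j | j) <;> simp [dup]

theorem conjTranspose_dup (U V : Matrix (Fin r) (Fin k) ℂ) : (dup U V)ᴴ = dup Uᴴ Vᵀ := by
  ext (i | i) (j | j) <;> simp [dup]

theorem dup_add_conjTranspose_dup (U V : Matrix (Fin r) (Fin r) ℂ) :
    dup U V + (dup U V)ᴴ = dup (U + Uᴴ) (V + Vᵀ) := by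
  rw [conjTranspose_dup, dup_add]

end dup

theorem passivity_Q {n m : ℕ}
    (Ωm Ωp : Matrix (Fin n) (Fin n) ℂ)
    (hΩm : Ωm = Ωmᴴ) (hΩp : Ωp = Ωpᵀ)
    (Cm Cp : Matrix (Fin m) (Fin n) ℂ)
    (Γm Γp : Matrix (Fin n) (Fin n) ℂ)
    (hΓm : Γm = (1/2 : ℂ) • (Cmᴴ * Cm - Cpᵀ * Cp.map (starRingEnd ℂ)))
    (hΓp : Γp = (1/2 : ℂ) • (Cmᴴ * Cp - Cpᵀ * Cm.map (starRingEnd ℂ)))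
    (A : Matrix (Fin n ⊕ Fin n) (Fin n ⊕ Fin n) ℂ)
    (hA : A = -dup (Complex.I • Ωm) (Complex.I • Ωp) - dup Γm Γp) :
    -(A + Aᴴ) = dup (Cmᴴ * Cm - Cpᵀ * Cp.map (starRingEnd ℂ))
        ((2 * Complex.I) • Ωp) := by
  have hA_dup : A = -dup (Complex.I • Ωm + Γm) (Complex.I • Ωp + Γp) := by
    rw [hA, dup_add, neg_add, sub_eq_add_neg]
  have hΓm_herm : Γmᴴ = Γm := by
    rw [hΓm, conjTranspose_smul,
      (isHermitian_conjTranspose_mul_self_sub_transpose_mul_map Cm Cp).eq]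
    norm_num
  have hΓp_antisymm : Γpᵀ = -Γp := by
    rw [hΓp, transpose_smul, transpose_conjTranspose_mul_sub_transpose_mul_map, smul_neg]
  rw [hA_dup, conjTranspose_neg, ← neg_add, neg_neg, dup_add_conjTranspose_dup]
  congr 1
  · rw [conjTranspose_add, conjTranspose_smul, ← hΩm, hΓm_herm, hΓm]
    simp only [Complex.star_def, Complex.conj_I]
    module
  · rw [transpose_add, transpose_smul, ← hΩp, hΓp_antisymm]
    module
end
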